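/- Let p > 2 and write δ_k(p), a_k(p) for the bubble sequences to indicate their dependence on p. Then for every k ≥ 1: δ_k(p)/δ_{k−1}(p) → 0 and a_k(p) → 2 as p → 2⁺. In particular δ_k(p) → 0 as p → 2⁺, and for every r > 0 the singular limit profile z_k^{(p)}(r) = log(2·a_k(p)²·b_k(p)/(r^{2−a_k(p)}·(1 + b_k(p)·r^{a_k(p)})²)), with b_k(p) = (√2/a_k(p))^{a_k(p)}, converges as p → 2⁺ to z̃₀(r) = log(16/(2 + r²)²), which satisfies −z̃₀'' − z̃₀'/r = e^{z̃₀} on (0,∞), z̃₀(√2) = 0, z̃₀'(√2) = −√2, and ∫₀^∞ e^{z̃₀(r)}·r dr = 4. -/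

import Mathlib

open Filter

/-- The bubble sequences `(a_k)`, `(δ_k)` for `p > 2`. -/
def IsBubbleSeq (p : ℝ) (a δ : ℕ → ℝ) : Prop :=
  a 0 = 2 ∧ δ 0 = 1 ∧
  ∀ k : ℕ,
    δ (k + 1) ∈ Set.Ioo 0 (δ k) ∧
    2 * p / (2 + a k) * (1 - δ (k + 1) / δ k) - 1 + (δ (k + 1) / δ k) ^ p = 0 ∧
    a (k + 1) = 2 - (δ (k + 1) / δ k) ^ (p - 1) * (2 + a k) ∧
    a (k + 1) ∈ Set.Ioo (0:ℝ) 2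

/-- The singular limit profile `z(r) = log (2 α² b / (r^{2-α} (1 + b r^α)²))` with
`b = (√2/α)^α`. -/
noncomputable def bubbleProfile (α : ℝ) (r : ℝ) : ℝ :=
  Real.log (2 * α ^ 2 * (Real.sqrt 2 / α) ^ α /
    (r ^ (2 - α) * (1 + (Real.sqrt 2 / α) ^ α * r ^ α) ^ 2))

/-- The regular limit profile `z̃₀(r) = log (16 / (2 + r²)²)` appearing in the limit
`p → 2⁺`. -/
noncomputable def ztilde0 (r : ℝ) : ℝ := Real.log (16 / (2 + r ^ 2) ^ 2)


lemma bseq_pos {p : ℝ} {a δ : ℕ → ℝ} (h : IsBubbleSeq p a δ) :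
    ∀ k, 0 < δ k ∧ δ k ≤ 1 := by
  intro k
  induction k with
  | zero => rw [h.2.1]; norm_num
  | succ n ih =>
    obtain ⟨⟨h1, h2⟩, _⟩ := h.2.2 n
    exact ⟨h1, h2.le.trans ih.2⟩

lemma bseq_A {p : ℝ} {a δ : ℕ → ℝ} (h : IsBubbleSeq p a δ) :
    ∀ k, 0 < a k ∧ a k ≤ 2 := by
  intro k
  cases k with
  | zero => rw [h.1]; norm_num
  | succ n =>
    obtain ⟨_, _, _, h1, h2⟩ := h.2.2 n
    exact ⟨h1, h2.le⟩

lemma bseq_t {p : ℝ} {a δ : ℕ → ℝ} (h : IsBubbleSeq p a δ) (k : ℕ) :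
    0 < δ (k + 1) / δ k ∧ δ (k + 1) / δ k < 1 := by
  obtain ⟨⟨h1, h2⟩, _⟩ := h.2.2 k
  have hδ := (bseq_pos h k).1
  exact ⟨div_pos h1 hδ, (div_lt_one hδ).mpr h2⟩

lemma bseq_ratio_le {p : ℝ} (hp : 2 < p) {a δ : ℕ → ℝ} (h : IsBubbleSeq p a δ) (k : ℕ) :
    δ (k + 1) / δ k ≤ (2 * p - 2 - a k) / (2 + a k) := by
  set t := δ (k + 1) / δ k with ht
  obtain ⟨ht0, ht1⟩ := bseq_t h k
  obtain ⟨_, heq, _, _⟩ := h.2.2 k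
  obtain ⟨hA0, hA2⟩ := bseq_A h k
  have ha2 : (0:ℝ) < 2 + a k := by linarith
  have htp : t ^ p ≤ t * t := by
    have h1 : t ^ p ≤ t ^ (2:ℝ) := Real.rpow_le_rpow_of_exponent_ge ht0 ht1.le hp.le
    have h2 : t ^ (2:ℝ) = t * t := by
      rw [show (2:ℝ) = ((2:ℕ):ℝ) by norm_num, Real.rpow_natCast]; ring
    exact h1.trans (le_of_eq h2)
  have hmain : (1 - t) * (1 + t) ≤ 2 * p / (2 + a k) * (1 - t) := by nlinarith
  rw [div_mul_eq_mul_div] at hmain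
  have h2p : (1 - t) * (1 + t) * (2 + a k) ≤ 2 * p * (1 - t) :=
    (le_div_iff₀ ha2).mp hmain
  have h1t : (0:ℝ) < 1 - t := by linarith
  have hfin : (1 + t) * (2 + a k) ≤ 2 * p := by nlinarith
  rw [le_div_iff₀ ha2]
  nlinarith

lemma bseq_gap {p : ℝ} (hp : 2 < p) {a δ : ℕ → ℝ} (h : IsBubbleSeq p a δ) (k : ℕ) :
    0 ≤ 2 - a (k + 1) ∧ 2 - a (k + 1) ≤ 4 * (δ (k + 1) / δ k) := by
  set t := δ (k + 1) / δ k with ht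
  obtain ⟨ht0, ht1⟩ := bseq_t h k
  obtain ⟨_, _, haeq, _⟩ := h.2.2 k
  obtain ⟨hA0, hA2⟩ := bseq_A h k
  have hp1 : t ^ (p - 1) ≤ t := by
    have h1 : t ^ (p - 1) ≤ t ^ (1:ℝ) :=
      Real.rpow_le_rpow_of_exponent_ge ht0 ht1.le (by linarith)
    rwa [Real.rpow_one] at h1
  have hp0 : 0 < t ^ (p - 1) := Real.rpow_pos_of_pos ht0 _
  constructor
  · rw [haeq]; nlinarith
  · rw [haeq]; nlinarith

lemma pos_aux (r : ℝ) : (0:ℝ) < 2 + r ^ 2 := by positivity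

lemma z_eq : ztilde0 = fun r => Real.log 16 - 2 * Real.log (2 + r ^ 2) := by
  funext r
  rw [ztilde0, Real.log_div (by norm_num) (by positivity), Real.log_pow]
  ring

lemma hd1 (r : ℝ) : HasDerivAt ztilde0 (-4 * r / (2 + r ^ 2)) r := by
  rw [z_eq]
  have h : HasDerivAt (fun r : ℝ => 2 + r ^ 2) (2 * r) r := by
    simpa using ((hasDerivAt_pow 2 r).const_add 2)
  have := ((h.log (pos_aux r).ne').const_mul 2).const_sub (Real.log 16)
  refine this.congr_deriv ?_
  ring

lemma d1_eq : deriv ztilde0 = fun r => -4 * r / (2 + r ^ 2) := by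
  funext r; exact (hd1 r).deriv

lemma hd2 (r : ℝ) : HasDerivAt (deriv ztilde0) ((4 * r ^ 2 - 8) / (2 + r ^ 2) ^ 2) r := by
  rw [d1_eq]
  have h1 : HasDerivAt (fun r : ℝ => -4 * r) (-4) r := by
    simpa using (hasDerivAt_id r).const_mul (-4 : ℝ)
  have h2 : HasDerivAt (fun r : ℝ => 2 + r ^ 2) (2 * r) r := by
    simpa using ((hasDerivAt_pow 2 r).const_add 2)
  have := h1.div h2 (pos_aux r).ne'
  refine this.congr_deriv ?_
  ring

lemma ode : ∀ r ∈ Set.Ioi (0:ℝ),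
    -(deriv (deriv ztilde0) r) - deriv ztilde0 r / r = Real.exp (ztilde0 r) := by
  intro r hr
  rw [(hd2 r).deriv, d1_eq, ztilde0, Real.exp_log (by positivity)]
  have hr0 : r ≠ 0 := (Set.mem_Ioi.mp hr).ne'
  field_simp
  ring

lemma zval : ztilde0 (Real.sqrt 2) = 0 := by
  rw [ztilde0, Real.sq_sqrt (by norm_num : (0:ℝ) ≤ 2)]
  norm_num

lemma zder : deriv ztilde0 (Real.sqrt 2) = -Real.sqrt 2 := by
  rw [d1_eq]
  show -4 * Real.sqrt 2 / (2 + Real.sqrt 2 ^ 2) = -Real.sqrt 2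
  rw [Real.sq_sqrt (by norm_num : (0:ℝ) ≤ 2)]
  ring

lemma zint : (∫ r in Set.Ioi (0:ℝ), Real.exp (ztilde0 r) * r) = 4 := by
  have hcong : ∀ r : ℝ, Real.exp (ztilde0 r) * r = 16 * r / (2 + r ^ 2) ^ 2 := by
    intro r
    rw [ztilde0, Real.exp_log (by positivity)]
    field_simp
  simp_rw [hcong]
  have hderiv : ∀ x ∈ Set.Ioi (0:ℝ),
      HasDerivAt (fun r : ℝ => -8 / (2 + r ^ 2)) (16 * x / (2 + x ^ 2) ^ 2) x := by
    intro x _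
    have h2 : HasDerivAt (fun r : ℝ => 2 + r ^ 2) (2 * x) x := by
      simpa using ((hasDerivAt_pow 2 x).const_add 2)
    have h := (h2.inv (pos_aux x).ne').const_mul (-8 : ℝ)
    refine h.congr_deriv ?_
    ring
  have hcont : ContinuousWithinAt (fun r : ℝ => -8 / (2 + r ^ 2)) (Set.Ici 0) 0 := by
    apply Continuous.continuousWithinAt
    exact continuous_const.div (by continuity) (fun x => (pos_aux x).ne')
  have htop : Tendsto (fun r : ℝ => -8 / (2 + r ^ 2)) atTop (nhds 0) := by
    apply Tendsto.div_atTop tendsto_const_nhds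
    exact tendsto_atTop_add_const_left _ 2 (tendsto_pow_atTop (by norm_num))
  have hpos : ∀ x ∈ Set.Ioi (0:ℝ), 0 ≤ 16 * x / (2 + x ^ 2) ^ 2 := by
    intro x hx
    exact div_nonneg (by nlinarith [Set.mem_Ioi.mp hx]) (by positivity)
  have := MeasureTheory.integral_Ioi_of_hasDerivAt_of_nonneg hcont hderiv hpos htop
  rw [this]; norm_num

lemma bp_val {r : ℝ} (hr : 0 < r) : bubbleProfile 2 r = ztilde0 r := by
  rw [bubbleProfile, ztilde0]
  have h1 : (Real.sqrt 2 / 2) ^ (2:ℝ) = 1 / 2 := by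
    have hc : (Real.sqrt 2 / 2 : ℝ) ^ (2:ℝ) = (Real.sqrt 2 / 2) ^ (2:ℕ) := by
      rw [← Real.rpow_natCast]; norm_num
    rw [hc, div_pow, Real.sq_sqrt (by norm_num : (0:ℝ) ≤ 2)]
    norm_num
  have h2 : r ^ ((2:ℝ) - 2) = 1 := by norm_num
  have h3 : r ^ (2:ℝ) = r ^ 2 := by
    rw [← Real.rpow_natCast r 2]; norm_num
  rw [h1, h2, h3]
  congr 1
  have : (0:ℝ) < 2 + r ^ 2 := by positivity
  field_simp
  ring

lemma bp_cont {r : ℝ} (hr : 0 < r) : ContinuousAt (fun α => bubbleProfile α r) 2 := by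
  unfold bubbleProfile
  have hb : ContinuousAt (fun α : ℝ => (Real.sqrt 2 / α) ^ α) 2 := by
    apply ContinuousAt.rpow (continuousAt_const.div continuousAt_id (by norm_num)) continuousAt_id
    left
    show Real.sqrt 2 / (2:ℝ) ≠ 0
    positivity
  have hnum : ContinuousAt (fun α : ℝ => 2 * α ^ 2 * (Real.sqrt 2 / α) ^ α) 2 :=
    (continuousAt_const.mul (continuousAt_id.pow 2)).mul hb
  have hd1 : ContinuousAt (fun α : ℝ => r ^ (2 - α)) 2 :=
    ContinuousAt.rpow continuousAt_const (continuousAt_const.sub continuousAt_id)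
      (Or.inl hr.ne')
  have hd2 : ContinuousAt (fun α : ℝ => r ^ α) 2 :=
    ContinuousAt.rpow continuousAt_const continuousAt_id (Or.inl hr.ne')
  have hden : ContinuousAt
      (fun α : ℝ => r ^ (2 - α) * (1 + (Real.sqrt 2 / α) ^ α * r ^ α) ^ 2) 2 :=
    hd1.mul (((continuousAt_const.add (hb.mul hd2))).pow 2)
  have hb0 : (0:ℝ) < (Real.sqrt 2 / 2) ^ (2:ℝ) := Real.rpow_pos_of_pos (by positivity) _
  have hr1 : (0:ℝ) < r ^ ((2:ℝ) - 2) := Real.rpow_pos_of_pos hr _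
  have hr2 : (0:ℝ) < r ^ (2:ℝ) := Real.rpow_pos_of_pos hr _
  have hdpos : (0:ℝ) < r ^ ((2:ℝ) - 2) * (1 + (Real.sqrt 2 / 2) ^ (2:ℝ) * r ^ (2:ℝ)) ^ 2 := by
    positivity
  have hq : ContinuousAt (fun α : ℝ => 2 * α ^ 2 * (Real.sqrt 2 / α) ^ α /
      (r ^ (2 - α) * (1 + (Real.sqrt 2 / α) ^ α * r ^ α) ^ 2)) 2 :=
    hnum.div hden hdpos.ne'
  have hqpos : (0:ℝ) < 2 * (2:ℝ) ^ 2 * (Real.sqrt 2 / 2) ^ (2:ℝ) /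
      (r ^ ((2:ℝ) - 2) * (1 + (Real.sqrt 2 / 2) ^ (2:ℝ) * r ^ (2:ℝ)) ^ 2) := by
    positivity
  exact hq.log hqpos.ne'


/-- Proposition 6.1 of the paper, the limit case `p → 2⁺`. -/
theorem statement19
    (A Δ : ℝ → ℕ → ℝ)
    (hB : ∀ p : ℝ, 2 < p → IsBubbleSeq p (A p) (Δ p)) :
    -- δ_k(p)/δ_{k-1}(p) → 0 and a_k(p) → 2 as p → 2⁺, for every k ≥ 1
    (∀ k : ℕ,
      Tendsto (fun p => Δ p (k + 1) / Δ p k) (nhdsWithin 2 (Set.Ioi 2)) (nhds 0)) ∧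
    (∀ k : ℕ,
      Tendsto (fun p => A p (k + 1)) (nhdsWithin 2 (Set.Ioi 2)) (nhds 2)) ∧
    -- in particular δ_k(p) → 0 as p → 2⁺, for every k ≥ 1
    (∀ k : ℕ,
      Tendsto (fun p => Δ p (k + 1)) (nhdsWithin 2 (Set.Ioi 2)) (nhds 0)) ∧
    -- pointwise convergence of the singular profiles to z̃₀
    (∀ k : ℕ, ∀ r : ℝ, 0 < r →
      Tendsto (fun p => bubbleProfile (A p (k + 1)) r)
        (nhdsWithin 2 (Set.Ioi 2)) (nhds (ztilde0 r))) ∧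
    -- properties of the limit profile z̃₀
    (∀ r ∈ Set.Ioi (0:ℝ),
      -(deriv (deriv ztilde0) r) - deriv ztilde0 r / r = Real.exp (ztilde0 r)) ∧
    ztilde0 (Real.sqrt 2) = 0 ∧
    deriv ztilde0 (Real.sqrt 2) = -Real.sqrt 2 ∧
    (∫ r in Set.Ioi (0:ℝ), Real.exp (ztilde0 r) * r) = 4 := by
  set F := nhdsWithin (2:ℝ) (Set.Ioi 2) with hF
  have hmem : ∀ᶠ p in F, 2 < p := eventually_mem_nhdsWithin
  have hid : Tendsto (fun p : ℝ => p) F (nhds 2) := tendsto_id.mono_left nhdsWithin_le_nhds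
  have hRat : ∀ k, Tendsto (fun p => A p k) F (nhds 2) →
      Tendsto (fun p => Δ p (k + 1) / Δ p k) F (nhds 0) := by
    intro k hA
    have hnum : Tendsto (fun p => 2 * p - 2 - A p k) F (nhds (2 * 2 - 2 - 2)) :=
      ((hid.const_mul 2).sub_const 2).sub hA
    rw [show (2:ℝ) * 2 - 2 - 2 = 0 by norm_num] at hnum
    have hden : Tendsto (fun p => 2 + A p k) F (nhds (2 + 2)) :=
      tendsto_const_nhds.add hA
    rw [show (2:ℝ) + 2 = 4 by norm_num] at hden
    have hg : Tendsto (fun p => (2 * p - 2 - A p k) / (2 + A p k)) F (nhds (0 / 4)) :=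
      hnum.div hden (by norm_num)
    rw [show (0:ℝ) / 4 = 0 by norm_num] at hg
    refine tendsto_of_tendsto_of_tendsto_of_le_of_le' tendsto_const_nhds hg ?_ ?_
    · filter_upwards [hmem] with p hp; exact (bseq_t (hB p hp) k).1.le
    · filter_upwards [hmem] with p hp; exact bseq_ratio_le hp (hB p hp) k
  have hAt : ∀ k, Tendsto (fun p => A p k) F (nhds 2) := by
    intro k
    induction k with
    | zero =>
      apply Tendsto.congr' _ (tendsto_const_nhds (x := (2:ℝ)))
      filter_upwards [hmem] with p hp
      exact ((hB p hp).1).symm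
    | succ n ih =>
      have ht := hRat n ih
      have h4 : Tendsto (fun p => 4 * (Δ p (n + 1) / Δ p n)) F (nhds (4 * 0)) :=
        ht.const_mul 4
      rw [show (4:ℝ) * 0 = 0 by norm_num] at h4
      have hgap : Tendsto (fun p => 2 - A p (n + 1)) F (nhds 0) := by
        refine tendsto_of_tendsto_of_tendsto_of_le_of_le' tendsto_const_nhds h4 ?_ ?_
        · filter_upwards [hmem] with p hp; exact (bseq_gap hp (hB p hp) n).1
        · filter_upwards [hmem] with p hp; exact (bseq_gap hp (hB p hp) n).2
      have := (tendsto_const_nhds (x := (2:ℝ)) (f := F)).sub hgap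
      simpa using this
  refine ⟨fun k => hRat k (hAt k), fun k => hAt (k + 1), ?_, ?_, ode, zval, zder, zint⟩
  · intro k
    refine tendsto_of_tendsto_of_tendsto_of_le_of_le' tendsto_const_nhds
      (hRat k (hAt k)) ?_ ?_
    · filter_upwards [hmem] with p hp; exact (bseq_pos (hB p hp) (k + 1)).1.le
    · filter_upwards [hmem] with p hp
      have h1 := (bseq_pos (hB p hp) (k + 1)).1
      have h2 := bseq_pos (hB p hp) k
      rw [le_div_iff₀ h2.1]
      nlinarith [h2.2]
  · intro k r hr
    have h := ((bp_cont hr).tendsto).comp (hAt (k + 1))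
    rw [← bp_val hr]
    exact h
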